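/- arXiv:2512.04704 — 5 statements merged into one kernel-verified Lean document; each statement's English description precedes it below -/
import Mathlib

section
/- For every state (m, v) ∈ ℝ² and adjoint (p_m, p_v) ∈ ℝ², the Isaacs (minimax) condition holds pointwise for the Isaacs integrand: inf over (u,π) ∈ U×P of sup over (θ,ξ) ∈ ℝ² of f(u, π, θ, ξ) equals sup over (θ,ξ) ∈ ℝ² of inf over (u,π) ∈ U×P of f(u, π, θ, ξ). -/
/-- The Isaacs integrand
`f(u, π, θ, ξ) = pm·(ηu + θ) + pv·(−2βv + Σ² + ξ − χπ) + w₁·m² + (w̄₂ + κu)·v + R·π²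
  + Ru·u² − θ²/(4λm) − ξ²/(4λv)`, with `Σ² = σL² + σc²`. -/
noncomputable def isaacsF (β η χ w₁ w₂bar κ Ru R lm lv σL σc m v pm pv : ℝ)
    (u p θ ξ : ℝ) : ℝ :=
  pm * (η * u + θ) + pv * (-2 * β * v + (σL ^ 2 + σc ^ 2) + ξ - χ * p)
    + w₁ * m ^ 2 + (w₂bar + κ * u) * v + R * p ^ 2 + Ru * u ^ 2
    - θ ^ 2 / (4 * lm) - ξ ^ 2 / (4 * lv)

/-!
The integrand separates as `f(u, π, θ, ξ) = A(u, π) + B(θ, ξ)`: the controls and the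
distortions do not interact. For a separable payoff both sides of the minimax identity equal
`min A + max B`, provided both extrema are attained. Here `A` is continuous on the compact
box `U × P`, and `B` is a sum of two concave parabolas with maximum `λ_m p_m² + λ_v p_v²`,
attained at `(θ, ξ) = (2 λ_m p_m, 2 λ_v p_v)`.
-/

section Separable

variable {α β γ : Type*} [ConditionallyCompleteLattice γ] [Add γ]

lemma IsGreatest.image_const_add [AddLeftMono γ] {B : β → γ} {t : Set β} {b : γ}
    (hb : IsGreatest (B '' t) b) (c : γ) :
    IsGreatest ((fun d => c + B d) '' t) (c + b) := by
  simpa only [Set.image_image] using (add_right_mono (a := c)).map_isGreatest hb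

lemma IsLeast.image_add_const [AddRightMono γ] {A : α → γ} {s : Set α} {a : γ}
    (ha : IsLeast (A '' s) a) (c : γ) :
    IsLeast ((fun q => A q + c) '' s) (a + c) := by
  simpa only [Set.image_image] using (add_left_mono (a := c)).map_isLeast ha

theorem sInf_sSup_add_eq_sSup_sInf_add [AddLeftMono γ] [AddRightMono γ]
    {A : α → γ} {B : β → γ} {s : Set α} {t : Set β} {a b : γ}
    (ha : IsLeast (A '' s) a) (hb : IsGreatest (B '' t) b) :
    sInf ((fun q => sSup ((fun d => A q + B d) '' t)) '' s)
      = sSup ((fun d => sInf ((fun q => A q + B d) '' s)) '' t) := by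
  have hsup : ∀ q, sSup ((fun d => A q + B d) '' t) = A q + b := fun q =>
    (hb.image_const_add (A q)).csSup_eq
  have hinf : ∀ d, sInf ((fun q => A q + B d) '' s) = a + B d := fun d =>
    (ha.image_add_const (B d)).csInf_eq
  simp only [hsup, hinf]
  rw [(ha.image_add_const b).csInf_eq, (hb.image_const_add a).csSup_eq]

end Separable

lemma mul_sub_sq_div_le {l : ℝ} (hl : 0 < l) (p θ : ℝ) :
    p * θ - θ ^ 2 / (4 * l) ≤ l * p ^ 2 := by
  have completed_square : p * θ - θ ^ 2 / (4 * l) = l * p ^ 2 - (θ - 2 * l * p) ^ 2 / (4 * l) := by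
    field_simp
    ring
  rw [completed_square]
  linarith [div_nonneg (sq_nonneg (θ - 2 * l * p)) (by positivity : (0 : ℝ) ≤ 4 * l)]

lemma mul_sub_sq_div_eq {l : ℝ} (hl : 0 < l) (p : ℝ) :
    p * (2 * l * p) - (2 * l * p) ^ 2 / (4 * l) = l * p ^ 2 := by
  field_simp
  ring

def isaacsControlPart (β η χ w₁ w₂bar κ Ru R σL σc m v pm pv u p : ℝ) : ℝ :=
  pm * (η * u) + pv * (-2 * β * v + (σL ^ 2 + σc ^ 2) - χ * p)
    + w₁ * m ^ 2 + (w₂bar + κ * u) * v + R * p ^ 2 + Ru * u ^ 2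

noncomputable def isaacsDistortionPart (lm lv pm pv θ ξ : ℝ) : ℝ :=
  pm * θ - θ ^ 2 / (4 * lm) + (pv * ξ - ξ ^ 2 / (4 * lv))

lemma isaacsF_eq_add (β η χ w₁ w₂bar κ Ru R lm lv σL σc m v pm pv u p θ ξ : ℝ) :
    isaacsF β η χ w₁ w₂bar κ Ru R lm lv σL σc m v pm pv u p θ ξ
      = isaacsControlPart β η χ w₁ w₂bar κ Ru R σL σc m v pm pv u p
        + isaacsDistortionPart lm lv pm pv θ ξ := by
  unfold isaacsF isaacsControlPart isaacsDistortionPart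
  ring

lemma isGreatest_isaacsDistortionPart {lm lv : ℝ} (hlm : 0 < lm) (hlv : 0 < lv) (pm pv : ℝ) :
    IsGreatest ((fun d : ℝ × ℝ => isaacsDistortionPart lm lv pm pv d.1 d.2) '' Set.univ)
      (lm * pm ^ 2 + lv * pv ^ 2) := by
  refine ⟨⟨(2 * lm * pm, 2 * lv * pv), Set.mem_univ _, ?_⟩, ?_⟩
  · simp only [isaacsDistortionPart, mul_sub_sq_div_eq hlm, mul_sub_sq_div_eq hlv]
  · rintro _ ⟨d, -, rfl⟩
    exact add_le_add (mul_sub_sq_div_le hlm pm d.1) (mul_sub_sq_div_le hlv pv d.2)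

theorem isaacs_condition_pointwise_general
    (β η χ w₁ w₂bar κ Ru R lm lv : ℝ) (σL σc : ℝ)
    (hlm : 0 < lm) (hlv : 0 < lv)
    (umin umax pmax : ℝ) (humm : umin ≤ umax) (hpmax : 0 ≤ pmax)
    (m v pm pv : ℝ) :
    sInf ((fun q : ℝ × ℝ =>
        sSup ((fun d : ℝ × ℝ =>
            isaacsF β η χ w₁ w₂bar κ Ru R lm lv σL σc m v pm pv q.1 q.2 d.1 d.2) ''
          Set.univ)) ''
      (Set.Icc umin umax ×ˢ Set.Icc 0 pmax))
    = sSup ((fun d : ℝ × ℝ =>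
        sInf ((fun q : ℝ × ℝ =>
            isaacsF β η χ w₁ w₂bar κ Ru R lm lv σL σc m v pm pv q.1 q.2 d.1 d.2) ''
          (Set.Icc umin umax ×ˢ Set.Icc 0 pmax))) ''
      Set.univ) := by
  set A : ℝ × ℝ → ℝ := fun q =>
    isaacsControlPart β η χ w₁ w₂bar κ Ru R σL σc m v pm pv q.1 q.2
  set K := Set.Icc umin umax ×ˢ Set.Icc 0 pmax
  have hK : IsCompact K := isCompact_Icc.prod isCompact_Icc
  have hKne : K.Nonempty := ⟨(umin, 0), ⟨le_rfl, humm⟩, ⟨le_rfl, hpmax⟩⟩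
  have hA : ContinuousOn A K := by
    unfold A isaacsControlPart
    fun_prop
  have hmin : IsLeast (A '' K) (sInf (A '' K)) :=
    (hK.image_of_continuousOn hA).isLeast_sInf (hKne.image A)
  simp only [isaacsF_eq_add]
  exact sInf_sSup_add_eq_sSup_sInf_add hmin (isGreatest_isaacsDistortionPart hlm hlv pm pv)

/-- For every state `(m, v)` and adjoint `(pm, pv)`, the Isaacs (minimax)
condition holds pointwise for the Isaacs integrand:
`inf_{(u,π) ∈ U×P} sup_{(θ,ξ) ∈ ℝ²} f(u, π, θ, ξ)
  = sup_{(θ,ξ) ∈ ℝ²} inf_{(u,π) ∈ U×P} f(u, π, θ, ξ)`. -/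
theorem isaacs_condition_pointwise
    (β η χ w₁ w₂bar κ Ru R lm lv : ℝ) (σL σc : ℝ)
    (hβ : 0 < β) (hη : 0 < η) (hχ : 0 < χ) (hw₁ : 0 < w₁) (hw₂ : 0 < w₂bar)
    (hκ : 0 < κ) (hRu : 0 < Ru) (hR : 0 < R) (hlm : 0 < lm) (hlv : 0 < lv)
    (umin umax pmax : ℝ) (humm : umin ≤ umax) (hpmax : 0 ≤ pmax)
    (m v pm pv : ℝ) :
    sInf ((fun q : ℝ × ℝ =>
        sSup ((fun d : ℝ × ℝ =>
            isaacsF β η χ w₁ w₂bar κ Ru R lm lv σL σc m v pm pv q.1 q.2 d.1 d.2) ''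
          Set.univ)) ''
      (Set.Icc umin umax ×ˢ Set.Icc 0 pmax))
    = sSup ((fun d : ℝ × ℝ =>
        sInf ((fun q : ℝ × ℝ =>
            isaacsF β η χ w₁ w₂bar κ Ru R lm lv σL σc m v pm pv q.1 q.2 d.1 d.2) ''
          (Set.Icc umin umax ×ˢ Set.Icc 0 pmax))) ''
      Set.univ) :=
  isaacs_condition_pointwise_general β η χ w₁ w₂bar κ Ru R lm lv σL σc hlm hlv umin umax pmax humm
    hpmax m v pm pv
end

section
/- Define u* := max(u_min, min(u_max, −(η·p_m + κ·v)/(2R_u))), π* := max(0, min(π_max, χ·p_v/(2R))), θ* := 2λ_m·p_m, and ξ* := 2λ_v·p_v. Then (u*, π*, θ*, ξ*) is a saddle point of the Isaacs integrand: for all (u, π) ∈ U×P and all (θ, ξ) ∈ ℝ², f(u*, π*, θ, ξ) ≤ f(u*, π*, θ*, ξ*) ≤ f(u, π, θ*, ξ*). -/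
/-- Clamped minimizer of a quadratic `a x² + b x` on `[lo, hi]`. -/
lemma quad_clamp_min (a b lo hi x : ℝ) (ha : 0 < a) (hx : x ∈ Set.Icc lo hi) :
    a * (max lo (min hi (-b / (2 * a)))) ^ 2 + b * (max lo (min hi (-b / (2 * a))))
      ≤ a * x ^ 2 + b * x := by
  obtain ⟨hx1, hx2⟩ := hx
  set s := -b / (2 * a) with hs
  have hsb : 2 * a * s + b = 0 := by
    rw [hs]; field_simp; ring
  rcases le_or_gt lo s with h1 | h1
  · rcases le_or_gt s hi with h2 | h2
    · have hc : max lo (min hi s) = s := by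
        rw [min_eq_right h2, max_eq_right h1]
      rw [hc]
      nlinarith [sq_nonneg (x - s)]
    · have hc : max lo (min hi s) = hi := by
        rw [min_eq_left h2.le, max_eq_right (hx1.trans hx2)]
      rw [hc]
      nlinarith [sq_nonneg (x - hi), mul_nonneg (mul_pos (by linarith : (0:ℝ) < 2*a) (by linarith : (0:ℝ) < s - hi)).le (by linarith : (0:ℝ) ≤ hi - x)]
  · have hc : max lo (min hi s) = lo :=
      max_eq_left ((min_le_right _ _).trans h1.le)
    rw [hc]
    nlinarith [sq_nonneg (x - lo), mul_nonneg (mul_pos (by linarith : (0:ℝ) < 2*a) (by linarith : (0:ℝ) < lo - s)).le (by linarith : (0:ℝ) ≤ x - lo)]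

/-- Define `u* = max(umin, min(umax, −(η·pm + κ·v)/(2Ru)))`,
`π* = max(0, min(πmax, χ·pv/(2R)))`, `θ* = 2λm·pm`, `ξ* = 2λv·pv`.  Then
`(u*, π*, θ*, ξ*)` is a saddle point of the Isaacs integrand: for all `(u, π) ∈ U×P` and all
`(θ, ξ) ∈ ℝ²`, `f(u*, π*, θ, ξ) ≤ f(u*, π*, θ*, ξ*) ≤ f(u, π, θ*, ξ*)`. -/
theorem isaacs_saddle_point
    (β η χ w₁ w₂bar κ Ru R lm lv : ℝ) (σL σc : ℝ)
    (hβ : 0 < β) (hη : 0 < η) (hχ : 0 < χ) (hw₁ : 0 < w₁) (hw₂ : 0 < w₂bar)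
    (hκ : 0 < κ) (hRu : 0 < Ru) (hR : 0 < R) (hlm : 0 < lm) (hlv : 0 < lv)
    (umin umax pmax : ℝ) (humm : umin ≤ umax) (hpmax : 0 ≤ pmax)
    (m v pm pv : ℝ) :
    ∀ u ∈ Set.Icc umin umax, ∀ p ∈ Set.Icc (0 : ℝ) pmax, ∀ θ ξ : ℝ,
      isaacsF β η χ w₁ w₂bar κ Ru R lm lv σL σc m v pm pv
          (max umin (min umax (-(η * pm + κ * v) / (2 * Ru))))
          (max 0 (min pmax (χ * pv / (2 * R)))) θ ξ
        ≤ isaacsF β η χ w₁ w₂bar κ Ru R lm lv σL σc m v pm pv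
            (max umin (min umax (-(η * pm + κ * v) / (2 * Ru))))
            (max 0 (min pmax (χ * pv / (2 * R)))) (2 * lm * pm) (2 * lv * pv) ∧
      isaacsF β η χ w₁ w₂bar κ Ru R lm lv σL σc m v pm pv
          (max umin (min umax (-(η * pm + κ * v) / (2 * Ru))))
          (max 0 (min pmax (χ * pv / (2 * R)))) (2 * lm * pm) (2 * lv * pv)
        ≤ isaacsF β η χ w₁ w₂bar κ Ru R lm lv σL σc m v pm pv u p
            (2 * lm * pm) (2 * lv * pv) := by
  intro u hu p hp θ ξ
  constructor
  · -- maximizing in (θ, ξ)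
    unfold isaacsF
    have e1 : (pm * (2 * lm * pm) - (2 * lm * pm) ^ 2 / (4 * lm)) = lm * pm ^ 2 := by
      field_simp; ring
    have e2 : (pv * (2 * lv * pv) - (2 * lv * pv) ^ 2 / (4 * lv)) = lv * pv ^ 2 := by
      field_simp; ring
    have h1 : pm * θ - θ ^ 2 / (4 * lm) ≤ lm * pm ^ 2 := by
      rw [sub_le_iff_le_add, ← sub_le_iff_le_add', le_div_iff₀ (by linarith : (0:ℝ) < 4 * lm)]
      nlinarith [sq_nonneg (θ - 2 * lm * pm)]
    have h2 : pv * ξ - ξ ^ 2 / (4 * lv) ≤ lv * pv ^ 2 := by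
      rw [sub_le_iff_le_add, ← sub_le_iff_le_add', le_div_iff₀ (by linarith : (0:ℝ) < 4 * lv)]
      nlinarith [sq_nonneg (ξ - 2 * lv * pv)]
    linarith
  · -- minimizing in (u, p)
    unfold isaacsF
    have h1 := quad_clamp_min Ru (η * pm + κ * v) umin umax u hRu hu
    have h2 := quad_clamp_min R (-(χ * pv)) 0 pmax p hR hp
    rw [neg_neg] at h2
    linarith
end

section
/- For every state (m, v) ∈ ℝ² and adjoint (p_m, p_v) ∈ ℝ², the unconstrained inf–sup value inf over (u,π) ∈ ℝ² of sup over (θ,ξ) ∈ ℝ² of f(u, π, θ, ξ) equals the optimized Hamiltonian H*(m, v, p_m, p_v) := λ_m·p_m² + λ_v·p_v² + w₁·m² + w̄₂·v + p_v·(−2βv + Σ²) − (η·p_m + κ·v)²/(4R_u) − χ²·p_v²/(4R). -/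
/-- For every state `(m, v)` and adjoint `(pm, pv)`, the unconstrained
inf–sup value `inf_{(u,π) ∈ ℝ²} sup_{(θ,ξ) ∈ ℝ²} f(u, π, θ, ξ)` equals the optimized
Hamiltonian `H*(m, v, pm, pv) = λm·pm² + λv·pv² + w₁·m² + w̄₂·v + pv·(−2βv + Σ²)
− (η·pm + κ·v)²/(4Ru) − χ²·pv²/(4R)`. -/
theorem isaacs_unconstrained_infSup_eq_optimized_hamiltonian
    (β η χ w₁ w₂bar κ Ru R lm lv : ℝ) (σL σc : ℝ)
    (hβ : 0 < β) (hη : 0 < η) (hχ : 0 < χ) (hw₁ : 0 < w₁) (hw₂ : 0 < w₂bar)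
    (hκ : 0 < κ) (hRu : 0 < Ru) (hR : 0 < R) (hlm : 0 < lm) (hlv : 0 < lv)
    (m v pm pv : ℝ) :
    sInf ((fun q : ℝ × ℝ =>
        sSup ((fun d : ℝ × ℝ =>
            isaacsF β η χ w₁ w₂bar κ Ru R lm lv σL σc m v pm pv q.1 q.2 d.1 d.2) ''
          Set.univ)) '' Set.univ)
    = lm * pm ^ 2 + lv * pv ^ 2 + w₁ * m ^ 2 + w₂bar * v
      + pv * (-2 * β * v + (σL ^ 2 + σc ^ 2))
      - (η * pm + κ * v) ^ 2 / (4 * Ru) - χ ^ 2 * pv ^ 2 / (4 * R) := by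
  set g : ℝ × ℝ → ℝ := fun q =>
    pm * (η * q.1) + pv * (-2 * β * v + (σL ^ 2 + σc ^ 2) - χ * q.2)
      + w₁ * m ^ 2 + (w₂bar + κ * q.1) * v + R * q.2 ^ 2 + Ru * q.1 ^ 2
      + lm * pm ^ 2 + lv * pv ^ 2 with hg
  have hsup : ∀ q : ℝ × ℝ,
      sSup ((fun d : ℝ × ℝ =>
          isaacsF β η χ w₁ w₂bar κ Ru R lm lv σL σc m v pm pv q.1 q.2 d.1 d.2) ''
        Set.univ) = g q := by
    intro q
    apply IsGreatest.csSup_eq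
    constructor
    · refine ⟨(2 * lm * pm, 2 * lv * pv), Set.mem_univ _, ?_⟩
      simp only [isaacsF, hg]
      field_simp
      ring
    · rintro x ⟨d, -, rfl⟩
      simp only [isaacsF, hg]
      have h1 : pm * d.1 - d.1 ^ 2 / (4 * lm) ≤ lm * pm ^ 2 := by
        have h : lm * pm ^ 2 - (pm * d.1 - d.1 ^ 2 / (4 * lm))
            = (d.1 - 2 * lm * pm) ^ 2 / (4 * lm) := by
          field_simp; ring
        nlinarith [div_nonneg (sq_nonneg (d.1 - 2 * lm * pm)) (by positivity : (0:ℝ) ≤ 4 * lm)]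
      have h2 : pv * d.2 - d.2 ^ 2 / (4 * lv) ≤ lv * pv ^ 2 := by
        have h : lv * pv ^ 2 - (pv * d.2 - d.2 ^ 2 / (4 * lv))
            = (d.2 - 2 * lv * pv) ^ 2 / (4 * lv) := by
          field_simp; ring
        nlinarith [div_nonneg (sq_nonneg (d.2 - 2 * lv * pv)) (by positivity : (0:ℝ) ≤ 4 * lv)]
      linarith [h1, h2]
  have himg : (fun q : ℝ × ℝ =>
      sSup ((fun d : ℝ × ℝ =>
          isaacsF β η χ w₁ w₂bar κ Ru R lm lv σL σc m v pm pv q.1 q.2 d.1 d.2) ''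
        Set.univ)) = g := funext hsup
  rw [himg]
  apply IsLeast.csInf_eq
  constructor
  · refine ⟨(-(η * pm + κ * v) / (2 * Ru), χ * pv / (2 * R)), Set.mem_univ _, ?_⟩
    simp only [hg]
    field_simp
    ring
  · rintro x ⟨q, -, rfl⟩
    simp only [hg]
    have h1 : -((η * pm + κ * v) ^ 2 / (4 * Ru))
        ≤ Ru * q.1 ^ 2 + (η * pm + κ * v) * q.1 := by
      have h : Ru * q.1 ^ 2 + (η * pm + κ * v) * q.1 + (η * pm + κ * v) ^ 2 / (4 * Ru)
          = (2 * Ru * q.1 + (η * pm + κ * v)) ^ 2 / (4 * Ru) := by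
        field_simp; ring
      nlinarith [div_nonneg (sq_nonneg (2 * Ru * q.1 + (η * pm + κ * v)))
        (by positivity : (0:ℝ) ≤ 4 * Ru)]
    have h2 : -(χ ^ 2 * pv ^ 2 / (4 * R)) ≤ R * q.2 ^ 2 - χ * pv * q.2 := by
      have h : R * q.2 ^ 2 - χ * pv * q.2 + χ ^ 2 * pv ^ 2 / (4 * R)
          = (2 * R * q.2 - χ * pv) ^ 2 / (4 * R) := by
        field_simp; ring
      nlinarith [div_nonneg (sq_nonneg (2 * R * q.2 - χ * pv))
        (by positivity : (0:ℝ) ≤ 4 * R)]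
    nlinarith [h1, h2]
end

section
/- Let w₁ > 0 and C > 0. If y : [a, b] → ℝ is differentiable on the compact interval [a, b] and satisfies y'(t) = w₁ + C·y(t)² for all t ∈ [a, b], then b − a < π/√(w₁·C). In other words, the maximal interval of existence of any solution of y' = w₁ + C·y² has length at most π/√(w₁·C). -/
/-!
With `k = √(C / w₁)`, the function `t ↦ arctan (k · y t)` has constant derivative `√(w₁ C)` along a
solution of `y' = w₁ + C y²`. Hence `√(w₁ C) (b - a)` is a difference of two values of `arctan`,
which is less than `π`.
-/

open Real Set

lemma sqrt_div_mul_add_mul_sq_div_one_add_sq {w C : ℝ} (hw : 0 < w) (hC : 0 ≤ C) (x : ℝ) :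
    √(C / w) * (w + C * x ^ 2) / (1 + (√(C / w) * x) ^ 2) = √(w * C) := by
  have hsq : √(C / w) ^ 2 = C / w := sq_sqrt (by positivity)
  have hsqrt : √(w * C) = √(C / w) * w := by
    rw [show w * C = C / w * w ^ 2 by field_simp, sqrt_mul (by positivity), sqrt_sq hw.le]
  have hden : 1 + (√(C / w) * x) ^ 2 = (w + C * x ^ 2) / w := by
    rw [mul_pow, hsq]
    field_simp
  rw [hden, hsqrt]
  field_simp

lemma hasDerivWithinAt_arctan_sqrt_div_mul_of_riccati {w C : ℝ} (hw : 0 < w) (hC : 0 ≤ C)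
    {y : ℝ → ℝ} {s : Set ℝ} {t : ℝ} (hy : HasDerivWithinAt y (w + C * y t ^ 2) s t) :
    HasDerivWithinAt (fun t => arctan (√(C / w) * y t)) √(w * C) s t := by
  have h := (hy.const_mul √(C / w)).arctan
  rwa [one_div, inv_mul_eq_div, sqrt_div_mul_add_mul_sq_div_one_add_sq hw hC] at h

lemma sub_eq_mul_sub_of_hasDerivWithinAt_const {f : ℝ → ℝ} {c a b : ℝ} (hab : a ≤ b)
    (hf : ∀ t ∈ Icc a b, HasDerivWithinAt f c (Icc a b) t) :
    f b - f a = c * (b - a) := by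
  have hg : ∀ t ∈ Icc a b, HasDerivWithinAt (fun t => f t - c * t) 0 (Icc a b) t := fun t ht => by
    have h := (hf t ht).sub ((hasDerivAt_id' t).const_mul c).hasDerivWithinAt
    rwa [mul_one, sub_self] at h
  have h := (convex_Icc a b).norm_image_sub_le_of_norm_hasDerivWithin_le (f' := fun _ => 0)
    (C := 0) hg (fun _ _ => norm_zero.le) (left_mem_Icc.mpr hab) (right_mem_Icc.mpr hab)
  rw [zero_mul, norm_le_zero_iff] at h
  linear_combination h

lemma arctan_sub_arctan_lt_pi (x y : ℝ) : arctan x - arctan y < π := by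
  linarith [arctan_lt_pi_div_two x, neg_pi_div_two_lt_arctan y]

/-- Let `w₁ > 0` and `C > 0`.  If `y : [a, b] → ℝ` is differentiable on the
compact interval `[a, b]` and satisfies `y'(t) = w₁ + C·y(t)²` for all `t ∈ [a, b]`, then
`b − a < π/√(w₁·C)`: the maximal interval of existence of any solution of `y' = w₁ + C·y²`
has length less than `π/√(w₁·C)`. -/
theorem riccati_maximal_interval_length
    (w₁ C a b : ℝ) (hw : 0 < w₁) (hC : 0 < C) (hab : a ≤ b)
    (y : ℝ → ℝ)
    (hy : ∀ t ∈ Set.Icc a b, HasDerivWithinAt y (w₁ + C * y t ^ 2) (Set.Icc a b) t) :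
    b - a < Real.pi / Real.sqrt (w₁ * C) := by
  have hgrowth := sub_eq_mul_sub_of_hasDerivWithinAt_const hab fun t ht =>
    hasDerivWithinAt_arctan_sqrt_div_mul_of_riccati hw hC.le (hy t ht)
  rw [lt_div_iff₀ (by positivity), mul_comm, ← hgrowth]
  exact arctan_sub_arctan_lt_pi _ _
end

section
/- Assume the adversary-strength conditions 4λ_m > η²/R_u and 4λ_v ≥ χ²/R, and set C_m := 4λ_m − η²/R_u > 0. Then every sextuple of differentiable functions (a₀, a₁, a₂, a₁₁, a₁₂, a₂₂) : [t₀, T] → ℝ⁶ solving the coupled Riccati ODE system with the terminal conditions a₂(T) = G_v, a₁₁(T) = G_m, a₀(T) = a₁(T) = a₁₂(T) = a₂₂(T) = 0 satisfies T − t₀ < π/√(w₁·C_m). Consequently, for horizons T exceeding this critical length, no solution of the terminal-value Riccati system exists on [0, T] (finite-cost robust control fails). -/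
/-!
Since `4λ_v ≥ χ²/R`, the equation for `a₁₁` gives the Riccati inequality
`a₁₁' ≥ w₁ + C_m a₁₁²`. For `K = √(w₁ C_m)` and `c = K / w₁`, the function
`arctan (c a₁₁ t) - K t` is then nondecreasing, and as `arctan` takes values in `(-π/2, π/2)`,
the interval on which `a₁₁` lives has length less than `π / K`.
-/

open Real Set

lemma sub_lt_pi_div_of_monotoneOn_arctan_sub_mul {g : ℝ → ℝ} {K a b : ℝ} (hK : 0 < K)
    (hg : MonotoneOn (fun t ↦ arctan (g t) - K * t) (Icc a b)) : b - a < π / K := by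
  rw [lt_div_iff₀ hK]
  rcases le_or_gt a b with hab | hba
  · have hmono := hg ⟨le_rfl, hab⟩ ⟨hab, le_rfl⟩ hab
    have := arctan_lt_pi_div_two (g b)
    have := neg_pi_div_two_lt_arctan (g a)
    dsimp only at hmono
    linarith
  · nlinarith [pi_pos]

lemma sqrt_mul_le_arctan_deriv {w C y d : ℝ} (hw : 0 < w) (hC : 0 ≤ C)
    (hd : w + C * y ^ 2 ≤ d) :
    √(w * C) ≤ 1 / (1 + (√(w * C) / w * y) ^ 2) * (√(w * C) / w * d) := by
  set K := √(w * C)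
  set c := K / w
  have hcw : c * w = K := div_mul_cancel₀ K hw.ne'
  have hc2w : c ^ 2 * w = C := by
    have hK2 : K ^ 2 = w * C := sq_sqrt (mul_nonneg hw.le hC)
    rw [show c ^ 2 * w = (c * w) ^ 2 / w by field_simp, hcw, hK2, mul_div_cancel_left₀ C hw.ne']
  have hc : 0 ≤ c := div_nonneg (sqrt_nonneg _) hw.le
  rw [one_div_mul_eq_div, le_div_iff₀ (by positivity)]
  calc K * (1 + (c * y) ^ 2) = c * (w + C * y ^ 2) := by rw [← hcw, ← hc2w]; ring
    _ ≤ c * d := mul_le_mul_of_nonneg_left hd hc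

lemma sub_lt_pi_div_sqrt_of_riccati_supersolution {y y' : ℝ → ℝ} {w C a b : ℝ}
    (hw : 0 < w) (hC : 0 < C)
    (hy : ∀ t ∈ Icc a b, HasDerivWithinAt y (y' t) (Icc a b) t)
    (hy' : ∀ t ∈ Icc a b, w + C * y t ^ 2 ≤ y' t) :
    b - a < π / √(w * C) := by
  set K := √(w * C)
  set c := K / w
  have hderiv : ∀ t ∈ Icc a b, HasDerivWithinAt (fun t ↦ arctan (c * y t) - K * t)
      (1 / (1 + (c * y t) ^ 2) * (c * y' t) - K * 1) (Icc a b) t := fun t ht ↦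
    ((hasDerivAt_arctan _).comp_hasDerivWithinAt t ((hy t ht).const_mul c)).sub
      ((hasDerivWithinAt_id t _).const_mul K)
  refine sub_lt_pi_div_of_monotoneOn_arctan_sub_mul (g := fun t ↦ c * y t)
    (sqrt_pos.2 (mul_pos hw hC)) ?_
  refine monotoneOn_of_hasDerivWithinAt_nonneg (convex_Icc a b)
    (fun t ht ↦ (hderiv t ht).continuousWithinAt)
    (fun t ht ↦ (hderiv t (interior_subset ht)).mono interior_subset) fun t ht ↦ ?_
  rw [sub_nonneg, mul_one]
  exact sqrt_mul_le_arctan_deriv hw hC.le (hy' t (interior_subset ht))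

theorem riccati_blowup_horizon_bound_general
    (η χ w₁ Ru R lm lv t₀ T : ℝ)
    (hw₁ : 0 < w₁)
    (hadvm : 4 * lm > η ^ 2 / Ru) (hadvv : 4 * lv ≥ χ ^ 2 / R)
    (a11 a12 : ℝ → ℝ)
    (h11 : ∀ t ∈ Set.Icc t₀ T, HasDerivWithinAt a11
      (w₁ + (4 * lm - η ^ 2 / Ru) * a11 t ^ 2 + (lv - χ ^ 2 / (4 * R)) * a12 t ^ 2)
      (Set.Icc t₀ T) t) :
    T - t₀ < Real.pi / Real.sqrt (w₁ * (4 * lm - η ^ 2 / Ru)) := by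
  have hρ : 0 ≤ lv - χ ^ 2 / (4 * R) := by
    rw [mul_comm 4 R, ← div_div]
    linarith
  refine sub_lt_pi_div_sqrt_of_riccati_supersolution hw₁ (sub_pos.2 hadvm) h11 fun t _ ↦ ?_
  linarith [mul_nonneg hρ (sq_nonneg (a12 t))]

/-- Assume `4λm > η²/Ru` and `4λv ≥ χ²/R`, and set
`Cm = 4λm − η²/Ru > 0`.  Then every sextuple of differentiable functions on `[t₀, T]`
solving the coupled Riccati ODE system with terminal conditions `a₂(T) = Gv`,
`a₁₁(T) = Gm`, `a₀(T) = a₁(T) = a₁₂(T) = a₂₂(T) = 0` satisfies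
`T − t₀ < π/√(w₁·Cm)`. -/
theorem riccati_blowup_horizon_bound
    (β η χ w₁ w₂bar κ Ru R lm lv σL σc Gm Gv t₀ T : ℝ)
    (hβ : 0 < β) (hη : 0 < η) (hχ : 0 < χ) (hw₁ : 0 < w₁) (hw₂ : 0 < w₂bar)
    (hκ : 0 < κ) (hRu : 0 < Ru) (hR : 0 < R) (hlm : 0 < lm) (hlv : 0 < lv)
    (hGm : 0 ≤ Gm) (hGv : 0 ≤ Gv) (ht : t₀ ≤ T)
    (hadvm : 4 * lm > η ^ 2 / Ru) (hadvv : 4 * lv ≥ χ ^ 2 / R)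
    (a0 a1 a2 a11 a12 a22 : ℝ → ℝ)
    (h0 : ∀ t ∈ Set.Icc t₀ T, HasDerivWithinAt a0
      ((σL ^ 2 + σc ^ 2) * a2 t + (lm - η ^ 2 / (4 * Ru)) * a1 t ^ 2
        + (lv - χ ^ 2 / (4 * R)) * a2 t ^ 2) (Set.Icc t₀ T) t)
    (h1 : ∀ t ∈ Set.Icc t₀ T, HasDerivWithinAt a1
      ((σL ^ 2 + σc ^ 2) * a12 t + (4 * lm - η ^ 2 / Ru) * a1 t * a11 t
        + (2 * lv - χ ^ 2 / (2 * R)) * a2 t * a12 t) (Set.Icc t₀ T) t)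
    (h2 : ∀ t ∈ Set.Icc t₀ T, HasDerivWithinAt a2
      (w₂bar - 2 * β * a2 t + 2 * (σL ^ 2 + σc ^ 2) * a22 t
        + (2 * lm - η ^ 2 / (2 * Ru)) * a1 t * a12 t
        + (4 * lv - χ ^ 2 / R) * a2 t * a22 t - η * κ / (2 * Ru) * a1 t)
      (Set.Icc t₀ T) t)
    (h11 : ∀ t ∈ Set.Icc t₀ T, HasDerivWithinAt a11
      (w₁ + (4 * lm - η ^ 2 / Ru) * a11 t ^ 2 + (lv - χ ^ 2 / (4 * R)) * a12 t ^ 2)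
      (Set.Icc t₀ T) t)
    (h12 : ∀ t ∈ Set.Icc t₀ T, HasDerivWithinAt a12
      (-2 * β * a12 t - η * κ / Ru * a11 t + (4 * lm - η ^ 2 / Ru) * a11 t * a12 t
        + (4 * lv - χ ^ 2 / R) * a12 t * a22 t) (Set.Icc t₀ T) t)
    (h22 : ∀ t ∈ Set.Icc t₀ T, HasDerivWithinAt a22
      (-4 * β * a22 t - κ ^ 2 / (4 * Ru) - η * κ / (2 * Ru) * a12 t
        + (lm - η ^ 2 / (4 * Ru)) * a12 t ^ 2 + (4 * lv - χ ^ 2 / R) * a22 t ^ 2)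
      (Set.Icc t₀ T) t)
    (hT2 : a2 T = Gv) (hT11 : a11 T = Gm)
    (hT0 : a0 T = 0) (hT1 : a1 T = 0) (hT12 : a12 T = 0) (hT22 : a22 T = 0) :
    T - t₀ < Real.pi / Real.sqrt (w₁ * (4 * lm - η ^ 2 / Ru)) :=
  riccati_blowup_horizon_bound_general η χ w₁ Ru R lm lv t₀ T hw₁ hadvm hadvv a11 a12 h11
end
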